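/- Let a: ℤ → ℂ be a finitely supported 1D filter and let ã be the 2D filter with ã(k₁,k₂) = a(k₁) if k₂ = 0 and 0 otherwise. For n ∈ ℕ set n₁ := ⌊(n+1)/2⌋ and n₂ := n − n₁. Then for all μ₁, μ₂ ∈ ℕ₀ and all (j,k) ∈ ℤ²: [∇_{(1,0)}^{μ₁} ∇_{(1,1)}^{μ₂} S_{ã,M_{√2}}^{n} δ](j,k) = [∇^{μ₁} S_{a,2}^{n₁} δ](j−k) · [∇^{μ₂} S_{a,2}^{n₂} δ](k). Consequently, for every 1 ≤ p ≤ ∞: ‖∇_{(1,0)}^{μ₁} ∇_{(1,1)}^{μ₂} S_{ã,M_{√2}}^{n} δ‖_{ℓ_p(ℤ²)} = ‖∇^{μ₁} S_{a,2}^{n₁} δ‖_{ℓ_p(ℤ)} · ‖∇^{μ₂} S_{a,2}^{n₂} δ‖_{ℓ_p(ℤ)}. -/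

import Mathlib

open Complex Real MeasureTheory
open scoped ENNReal

/-- The 1D subdivision operator with dilation 2: `(S_{a,2} v)(n) = 2 ∑_k v(k) a(n − 2k)`. -/
noncomputable def S1 (a : ℤ → ℂ) (v : ℤ → ℂ) : ℤ → ℂ :=
  fun n => 2 * ∑ᶠ k : ℤ, v k * a (n - 2 * k)

/-- The 2D subdivision operator with the quincunx dilation `M_{√2} = [[1,1],[1,−1]]`:
`(S_{a,M} v)(n) = 2 ∑_k v(k) a(n − Mk)`. -/
noncomputable def S2q (a : ℤ × ℤ → ℂ) (v : ℤ × ℤ → ℂ) : ℤ × ℤ → ℂ :=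
  fun n => 2 * ∑ᶠ k : ℤ × ℤ, v k * a (n.1 - (k.1 + k.2), n.2 - (k.1 - k.2))

/-- The 1D backward difference `∇u = u − u(·−1)`. -/
def diff1 (u : ℤ → ℂ) : ℤ → ℂ := fun n => u n - u (n - 1)

/-- The 2D difference operator `∇_γ u = u − u(·−γ)`. -/
def diff2 (γ : ℤ × ℤ) (u : ℤ × ℤ → ℂ) : ℤ × ℤ → ℂ := fun n => u n - u (n - γ)

/-- The 1D Dirac sequence. -/
def δ1 : ℤ → ℂ := fun k => if k = 0 then 1 else 0

/-- The 2D Dirac sequence. -/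
def δ2 : ℤ × ℤ → ℂ := fun k => if k = 0 then 1 else 0

/-- The 1D filter `a` embedded as a 2D filter by identifying `ℤ` with `ℤ × {0}`. -/
def embed2D (a : ℤ → ℂ) : ℤ × ℤ → ℂ := fun k => if k.2 = 0 then a k.1 else 0

/-- The 2D sequence `∇_{(1,0)}^{μ₁} ∇_{(1,1)}^{μ₂} S_{ã,M_{√2}}^{n} δ`. -/
noncomputable def seq2D (a : ℤ → ℂ) (n μ₁ μ₂ : ℕ) : ℤ × ℤ → ℂ :=
  (diff2 (1, 0))^[μ₁] ((diff2 (1, 1))^[μ₂] ((S2q (embed2D a))^[n] δ2))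

/-- The 1D sequence `∇^{μ} S_{a,2}^{m} δ`. -/
noncomputable def seq1D (a : ℤ → ℂ) (m μ : ℕ) : ℤ → ℂ :=
  diff1^[μ] ((S1 a)^[m] δ1)

/-!
In the coordinates `(j - k, k)` the Dirac sequence is `δ ⊗ δ`, and one quincunx step with the
embedded filter `ã` maps `u ⊗ v` to `(S_{a,2} v) ⊗ u`: only the points `Mq` on the line
`j - k = q₁ - q₂` contribute, and along it `ã` sees `a(j - k - 2q₂)`. So after `n` steps the two
factors carry `⌈n/2⌉` and `⌊n/2⌋` one-dimensional subdivisions. The differences `∇_{(1,0)}` and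
`∇_{(1,1)}` act as `∇` on the first and second factor, and since the shear `(j, k) ↦ (j - k, k)`
is a bijection of `ℤ²`, the `ℓ_p` norm of `u ⊗ v` is the product of the norms.
-/

theorem finsum_eq_finsum_comp_of_support_subset_range {α β M : Type*} [AddCommMonoid M]
    {f : β → M} {g : α → β} (hg : Function.Injective g) (hf : Function.support f ⊆ Set.range g) :
    ∑ᶠ b, f b = ∑ᶠ a, f (g a) := by
  rw [← finsum_mem_range hg, ← finsum_mem_univ]
  exact finsum_mem_inter_support_eq' f _ _ fun b hb => iff_of_true trivial (hf hb)

section CountingMeasure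

variable {α β E : Type*} [MeasurableSpace α] [MeasurableSingletonClass α]
  [MeasurableSpace β] [MeasurableSingletonClass β]

theorem eLpNorm_count_comp_equiv [ENorm E] (e : α ≃ β) (f : β → E) (p : ℝ≥0∞) :
    eLpNorm (f ∘ e) p Measure.count = eLpNorm f p Measure.count := by
  rcases eq_or_ne p 0 with rfl | hp0
  · simp
  rcases eq_or_ne p ∞ with rfl | hptop
  · simp only [eLpNorm_exponent_top, eLpNormEssSup_count, Function.comp_apply]
    exact e.iSup_comp (g := fun b => ‖f b‖ₑ)
  · simp only [eLpNorm_eq_lintegral_rpow_enorm_toReal hp0 hptop, lintegral_count,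
      Function.comp_apply]
    rw [e.tsum_eq (fun b => ‖f b‖ₑ ^ p.toReal)]

theorem eLpNorm_count_mul_prod [SeminormedRing E] [NormMulClass E] (u : α → E) (v : β → E)
    (p : ℝ≥0∞) :
    eLpNorm (fun q : α × β => u q.1 * v q.2) p Measure.count
      = eLpNorm u p Measure.count * eLpNorm v p Measure.count := by
  rcases eq_or_ne p 0 with rfl | hp0
  · simp
  rcases eq_or_ne p ∞ with rfl | hptop
  · simp only [eLpNorm_exponent_top, eLpNormEssSup_count, enorm_mul, iSup_prod,
      ENNReal.mul_iSup, ENNReal.iSup_mul]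
    exact iSup_comm
  · have hp : 0 ≤ p.toReal := ENNReal.toReal_nonneg
    simp only [eLpNorm_eq_lintegral_rpow_enorm_toReal hp0 hptop, lintegral_count, enorm_mul,
      ENNReal.mul_rpow_of_nonneg _ _ hp, ENNReal.tsum_prod', ENNReal.tsum_mul_left,
      ENNReal.tsum_mul_right]
    exact ENNReal.mul_rpow_of_nonneg _ _ (by positivity)

end CountingMeasure

def shearTensor (u v : ℤ → ℂ) : ℤ × ℤ → ℂ := fun q => u (q.1 - q.2) * v q.2

theorem δ2_eq_shearTensor : δ2 = shearTensor δ1 δ1 := by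
  funext q
  by_cases h : q.2 = 0 <;> simp [δ2, δ1, shearTensor, Prod.ext_iff, h]

theorem S2q_embed2D_shearTensor (a u v : ℤ → ℂ) :
    S2q (embed2D a) (shearTensor u v) = shearTensor (S1 a v) u := by
  funext ⟨j, k⟩
  have hline : Function.support (fun q : ℤ × ℤ =>
      shearTensor u v q * embed2D a (j - (q.1 + q.2), k - (q.1 - q.2)))
        ⊆ Set.range fun t : ℤ => (t + k, t) := by
    rintro ⟨q₁, q₂⟩ hq
    have : k - (q₁ - q₂) = 0 := by
      by_contra h
      simp [embed2D, h] at hq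
    exact ⟨q₂, by ext <;> simp only; omega⟩
  have hinj : Function.Injective fun t : ℤ => (t + k, t) := fun s t h => congrArg Prod.snd h
  have hterm : ∀ t : ℤ, shearTensor u v (t + k, t) * embed2D a (j - (t + k + t), k - (t + k - t))
      = u k * (v t * a (j - k - 2 * t)) := by
    intro t
    simp only [shearTensor, embed2D, add_sub_cancel_left, sub_self, ↓reduceIte]
    rw [show j - (t + k + t) = j - k - 2 * t by ring]
    ring
  simp only [S2q, S1, shearTensor] at hline hterm ⊢
  rw [finsum_eq_finsum_comp_of_support_subset_range hinj hline, finsum_congr hterm, ← mul_finsum]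
  ring

theorem iterate_S2q_embed2D_δ2 (a : ℤ → ℂ) (n : ℕ) :
    (S2q (embed2D a))^[n] δ2 = shearTensor ((S1 a)^[(n + 1) / 2] δ1) ((S1 a)^[n / 2] δ1) := by
  induction n with
  | zero => exact δ2_eq_shearTensor
  | succ n ih =>
    rw [Function.iterate_succ_apply', ih, S2q_embed2D_shearTensor,
      ← Function.iterate_succ_apply' (S1 a), show (n + 1 + 1) / 2 = n / 2 + 1 by omega]

theorem diff2_one_zero_shearTensor (u v : ℤ → ℂ) :
    diff2 (1, 0) (shearTensor u v) = shearTensor (diff1 u) v := by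
  funext ⟨j, k⟩
  simp only [diff2, diff1, shearTensor, Prod.mk_sub_mk, sub_zero, sub_right_comm j 1 k]
  ring

theorem diff2_one_one_shearTensor (u v : ℤ → ℂ) :
    diff2 (1, 1) (shearTensor u v) = shearTensor u (diff1 v) := by
  funext ⟨j, k⟩
  simp only [diff2, diff1, shearTensor, Prod.mk_sub_mk, sub_sub_sub_cancel_right]
  ring

theorem iterate_diff2_one_zero_shearTensor (u v : ℤ → ℂ) (μ : ℕ) :
    (diff2 (1, 0))^[μ] (shearTensor u v) = shearTensor (diff1^[μ] u) v :=
  ((Function.Semiconj.iterate_right (f := fun u => shearTensor u v)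
    fun u => (diff2_one_zero_shearTensor u v).symm) μ u).symm

theorem iterate_diff2_one_one_shearTensor (u v : ℤ → ℂ) (μ : ℕ) :
    (diff2 (1, 1))^[μ] (shearTensor u v) = shearTensor u (diff1^[μ] v) :=
  ((Function.Semiconj.iterate_right (f := shearTensor u)
    fun v => (diff2_one_one_shearTensor u v).symm) μ v).symm

theorem seq2D_eq_shearTensor (a : ℤ → ℂ) (n μ₁ μ₂ : ℕ) :
    seq2D a n μ₁ μ₂ = shearTensor (seq1D a ((n + 1) / 2) μ₁) (seq1D a (n - (n + 1) / 2) μ₂) := by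
  rw [seq2D, iterate_S2q_embed2D_δ2, iterate_diff2_one_one_shearTensor,
    iterate_diff2_one_zero_shearTensor, show n - (n + 1) / 2 = n / 2 by omega]
  rfl

theorem eLpNorm_count_shearTensor (u v : ℤ → ℂ) (p : ℝ≥0∞) :
    eLpNorm (shearTensor u v) p Measure.count
      = eLpNorm u p Measure.count * eLpNorm v p Measure.count := by
  let shear : ℤ × ℤ ≃ ℤ × ℤ :=
    { toFun := fun q => (q.1 - q.2, q.2)
      invFun := fun q => (q.1 + q.2, q.2)
      left_inv := fun q => by simp
      right_inv := fun q => by simp }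
  rw [← eLpNorm_count_mul_prod]
  exact eLpNorm_count_comp_equiv shear (fun q => u q.1 * v q.2) p

theorem stmt_16_general (a : ℤ → ℂ)
    (n : ℕ) (μ₁ μ₂ : ℕ) :
    (∀ jk : ℤ × ℤ, seq2D a n μ₁ μ₂ jk
      = seq1D a ((n + 1) / 2) μ₁ (jk.1 - jk.2) * seq1D a (n - (n + 1) / 2) μ₂ jk.2) ∧
    (∀ p : ℝ≥0∞, 1 ≤ p →
      eLpNorm (seq2D a n μ₁ μ₂) p MeasureTheory.Measure.count
        = eLpNorm (seq1D a ((n + 1) / 2) μ₁) p MeasureTheory.Measure.count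
            * eLpNorm (seq1D a (n - (n + 1) / 2) μ₂) p MeasureTheory.Measure.count) := by
  refine ⟨fun jk => by rw [seq2D_eq_shearTensor]; rfl, fun p _ => ?_⟩
  rw [seq2D_eq_shearTensor, eLpNorm_count_shearTensor]

/-- factorization of quincunx subdivision of the embedded 1D filter `ã`
into two 1D subdivisions, together with the resulting `ℓ_p`-norm identity, where
`n₁ = ⌊(n+1)/2⌋` and `n₂ = n − n₁`. -/
theorem stmt_16 (a : ℤ → ℂ) (hafin : (Function.support a).Finite)
    (n : ℕ) (μ₁ μ₂ : ℕ) :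
    (∀ jk : ℤ × ℤ, seq2D a n μ₁ μ₂ jk
      = seq1D a ((n + 1) / 2) μ₁ (jk.1 - jk.2) * seq1D a (n - (n + 1) / 2) μ₂ jk.2) ∧
    (∀ p : ℝ≥0∞, 1 ≤ p →
      eLpNorm (seq2D a n μ₁ μ₂) p MeasureTheory.Measure.count
        = eLpNorm (seq1D a ((n + 1) / 2) μ₁) p MeasureTheory.Measure.count
            * eLpNorm (seq1D a (n - (n + 1) / 2) μ₂) p MeasureTheory.Measure.count) :=
  stmt_16_general a n μ₁ μ₂
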